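/- arXiv:2507.03575 — 3 statements merged into one kernel-verified Lean document; each statement's English description precedes it below -/
import Mathlib

section
/- (Parabolic scaling bound for the heat kernel) The heat kernel Φ(t,x) = (4πt)^{-d/2} exp(−|x|²/(4t)) 𝟙_{t>0} satisfies, for every l ∈ ℕ and k ∈ ℕ^d, a pointwise bound |∂_t^l ∂_x^k Φ(t,x)| ≤ C(d,l,k) · ‖(t,x)‖_𝔰^{−d−2l−|k|₁} for all (t,x) ≠ 0, where ‖(t,x)‖_𝔰 = (|t| + |x|²)^{1/2} is the parabolic metric. -/
open MeasureTheory

/-- Partial derivative in the time variable of a function on `ℝ × ℝ^d`. -/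
noncomputable def pderivT {d : ℕ} (K : ℝ × (Fin d → ℝ) → ℝ) : ℝ × (Fin d → ℝ) → ℝ :=
  fun p => deriv (fun t => K (t, p.2)) p.1

/-- Partial derivative in the `i`-th spatial variable of a function on `ℝ × ℝ^d`. -/
noncomputable def pderivX {d : ℕ} (i : Fin d) (K : ℝ × (Fin d → ℝ) → ℝ) :
    ℝ × (Fin d → ℝ) → ℝ :=
  fun p => deriv (fun s => K (p.1, Function.update p.2 i s)) (p.2 i)

/-- Mixed partial derivative `∂_t^l ∂_x^k` of a function on `ℝ × ℝ^d`. -/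
noncomputable def pmixed {d : ℕ} (l : ℕ) (k : Fin d → ℕ) (K : ℝ × (Fin d → ℝ) → ℝ) :
    ℝ × (Fin d → ℝ) → ℝ :=
  (pderivT)^[l] (List.foldr (fun i F => (pderivX i)^[k i] F) K (List.finRange d))

/-- The `d`-dimensional heat kernel `Φ(t,x) = (4πt)^{-d/2} exp(−|x|²/(4t)) 𝟙_{t>0}`. -/
noncomputable def heatK (d : ℕ) : ℝ × (Fin d → ℝ) → ℝ :=
  fun p => if 0 < p.1 then
    (4 * Real.pi * p.1) ^ (-(d : ℝ) / 2) * Real.exp (-(∑ i, (p.2 i) ^ 2) / (4 * p.1))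
  else 0

/-!
The heat kernel is parabolically homogeneous: `Φ(c²t, cx) = c^{-d} Φ(t, x)` for `c > 0`, and by
the chain rule each `∂_t` lowers the degree of homogeneity by `2` and each `∂_x` by `1`. The
kernel is smooth away from the origin, including across `t = 0` where `x ≠ 0`, because there
`Φ(t, x) = (π|x|²)^{-d/2} g(4t/|x|²)` with `g(u) = exp(-1/u) u^{-d/2} 𝟙_{u>0}` smooth. So
`∂_t^l ∂_x^k Φ` is continuous on the compact parabolic unit sphere `|t| + |x|² = 1`, hence
bounded there, and rescaling any `(t, x) ≠ 0` onto that sphere gives the bound.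
-/

open Real Filter Topology
open scoped ContDiff

noncomputable def rpowExpNegInvGlue (a u : ℝ) : ℝ :=
  if 0 < u then exp (-u⁻¹) * u ^ (-a) else 0

namespace rpowExpNegInvGlue

lemma of_nonpos {a u : ℝ} (hu : u ≤ 0) : rpowExpNegInvGlue a u = 0 :=
  if_neg hu.not_gt

lemma of_pos {a u : ℝ} (hu : 0 < u) : rpowExpNegInvGlue a u = exp (-u⁻¹) * u ^ (-a) :=
  if_pos hu

lemma inv_mul (a u : ℝ) : u⁻¹ * rpowExpNegInvGlue a u = rpowExpNegInvGlue (a + 1) u := by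
  rcases le_or_gt u 0 with hu | hu
  · rw [of_nonpos hu, of_nonpos hu, mul_zero]
  · rw [of_pos hu, of_pos hu, neg_add, rpow_add hu, rpow_neg_one]
    ring

lemma tendsto_zero (a : ℝ) : Tendsto (rpowExpNegInvGlue a) (𝓝 (0 : ℝ)) (𝓝 0) := by
  refine (tendsto_sup.2 ⟨?_, ?_⟩).mono_left (nhdsLE_sup_nhdsGT (0 : ℝ)).ge
  · refine tendsto_const_nhds.congr' ?_
    filter_upwards [self_mem_nhdsWithin] with u (hu : u ≤ 0)
    rw [of_nonpos hu]
  · -- substitute `v = u⁻¹`: `v ^ a * exp (-v) → 0` as `v → ∞`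
    refine ((tendsto_rpow_mul_exp_neg_mul_atTop_nhds_zero a 1 one_pos).comp
      tendsto_inv_nhdsGT_zero).congr' ?_
    filter_upwards [self_mem_nhdsWithin] with u (hu : 0 < u)
    rw [of_pos hu, Function.comp_apply, inv_rpow hu.le, ← rpow_neg hu.le, neg_one_mul, mul_comm]

lemma hasDerivAt (a u : ℝ) :
    HasDerivAt (rpowExpNegInvGlue a)
      (rpowExpNegInvGlue (a + 2) u - a * rpowExpNegInvGlue (a + 1) u) u := by
  rcases lt_trichotomy u 0 with hu | rfl | hu
  · rw [of_nonpos hu.le, of_nonpos hu.le, mul_zero, sub_zero]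
    refine (hasDerivAt_const u (0 : ℝ)).congr_of_eventuallyEq ?_
    filter_upwards [Iio_mem_nhds hu] with v (hv : v < 0)
    rw [of_nonpos hv.le]
  · rw [of_nonpos le_rfl, of_nonpos le_rfl, mul_zero, sub_zero, hasDerivAt_iff_tendsto_slope]
    have hslope : slope (rpowExpNegInvGlue a) 0 = rpowExpNegInvGlue (a + 1) := by
      ext v
      rw [slope_def_field, of_nonpos le_rfl, sub_zero, sub_zero, div_eq_inv_mul, inv_mul]
    rw [hslope]
    exact (tendsto_zero (a + 1)).mono_left nhdsWithin_le_nhds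
  · have hexp : HasDerivAt (fun v => exp (-v⁻¹)) (exp (-u⁻¹) * (u ^ 2)⁻¹) u := by
      simpa using (hasDerivAt_inv hu.ne').neg.exp
    have hmul := hexp.mul (hasDerivAt_rpow_const (p := -a) (Or.inl hu.ne'))
    refine (hmul.congr_deriv ?_).congr_of_eventuallyEq ?_
    · rw [show a + 2 = a + 1 + 1 by ring, ← inv_mul, ← inv_mul, of_pos hu, rpow_sub_one hu.ne']
      ring
    · filter_upwards [Ioi_mem_nhds hu] with v (hv : 0 < v)
      rw [of_pos hv, Pi.mul_apply]

lemma contDiff (a : ℝ) : ContDiff ℝ ∞ (rpowExpNegInvGlue a) := by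
  suffices h : ∀ n : ℕ, ∀ a, ContDiff ℝ n (rpowExpNegInvGlue a) from
    contDiff_infty.2 fun n => h n a
  intro n
  induction n with
  | zero =>
    intro a
    exact contDiff_zero.2 <| continuous_iff_continuousAt.2 fun u =>
      (hasDerivAt a u).continuousAt
  | succ n ih =>
    intro a
    rw [Nat.cast_succ, contDiff_succ_iff_deriv]
    refine ⟨fun u => (hasDerivAt a u).differentiableAt, by simp, ?_⟩
    rw [show deriv (rpowExpNegInvGlue a) = _ from funext fun u => (hasDerivAt a u).deriv]
    exact (ih (a + 2)).sub (contDiff_const.mul (ih (a + 1)))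

end rpowExpNegInvGlue

lemma sum_sq_pos_of_ne_zero {ι : Type*} [Fintype ι] {x : ι → ℝ} (hx : x ≠ 0) :
    0 < ∑ i, x i ^ 2 := by
  obtain ⟨i, hi⟩ := Function.ne_iff.1 hx
  exact Finset.sum_pos' (fun j _ => sq_nonneg _) ⟨i, Finset.mem_univ i, pow_two_pos_of_ne_zero hi⟩

lemma heatK_eq_rpowExpNegInvGlue {d : ℕ} {p : ℝ × (Fin d → ℝ)} (hp : 0 < ∑ i, p.2 i ^ 2) :
    heatK d p = (π * ∑ i, p.2 i ^ 2) ^ (-(d : ℝ) / 2)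
      * rpowExpNegInvGlue ((d : ℝ) / 2) (4 * p.1 / ∑ i, p.2 i ^ 2) := by
  by_cases ht : 0 < p.1
  · have hu : 0 < 4 * p.1 / ∑ i, p.2 i ^ 2 := by positivity
    have hexp : -(4 * p.1 / ∑ i, p.2 i ^ 2)⁻¹ = -(∑ i, p.2 i ^ 2) / (4 * p.1) := by
      rw [inv_div, neg_div]
    have hpow : (π * ∑ i, p.2 i ^ 2) ^ (-(d : ℝ) / 2) * (4 * p.1 / ∑ i, p.2 i ^ 2) ^ (-(d : ℝ) / 2)
        = (4 * π * p.1) ^ (-(d : ℝ) / 2) := by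
      rw [← mul_rpow (by positivity) hu.le]
      congr 1
      field_simp
    rw [heatK, if_pos ht, rpowExpNegInvGlue.of_pos hu, hexp, ← hpow, neg_div]
    ring
  · rw [heatK, if_neg ht, rpowExpNegInvGlue.of_nonpos, mul_zero]
    exact div_nonpos_of_nonpos_of_nonneg (by linarith [not_lt.1 ht]) hp.le

lemma contDiff_sum_sq_snd (d : ℕ) :
    ContDiff ℝ ∞ (fun p : ℝ × (Fin d → ℝ) => ∑ i, p.2 i ^ 2) :=
  ContDiff.sum fun i _ => ((contDiff_apply ℝ ℝ i).comp contDiff_snd).pow 2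

lemma contDiffAt_heatK {d : ℕ} {p : ℝ × (Fin d → ℝ)} (hp : p ≠ 0) :
    ContDiffAt ℝ ∞ (heatK d) p := by
  rcases lt_trichotomy p.1 0 with ht | ht | ht
  · refine (contDiffAt_const (c := (0 : ℝ))).congr_of_eventuallyEq ?_
    filter_upwards [(isOpen_lt continuous_fst continuous_const).mem_nhds ht] with q (hq : q.1 < 0)
    rw [heatK, if_neg hq.not_gt]
  · have hr : 0 < ∑ i, p.2 i ^ 2 := sum_sq_pos_of_ne_zero fun hx => hp (Prod.ext ht hx)
    have hsmooth : ContDiffAt ℝ ∞ (fun q : ℝ × (Fin d → ℝ) => (π * ∑ i, q.2 i ^ 2) ^ (-(d : ℝ) / 2)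
        * rpowExpNegInvGlue ((d : ℝ) / 2) (4 * q.1 / ∑ i, q.2 i ^ 2)) p :=
      ((contDiff_const.mul (contDiff_sum_sq_snd d)).contDiffAt.rpow_const_of_ne (by positivity)).mul
        ((rpowExpNegInvGlue.contDiff _).contDiffAt.comp p
          ((contDiff_const.mul contDiff_fst).contDiffAt.div (contDiff_sum_sq_snd d).contDiffAt
            hr.ne'))
    refine hsmooth.congr_of_eventuallyEq ?_
    filter_upwards [(isOpen_lt continuous_const (contDiff_sum_sq_snd d).continuous).mem_nhds hr]
      with q hq
    exact heatK_eq_rpowExpNegInvGlue hq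
  · have hsmooth : ContDiffAt ℝ ∞ (fun q : ℝ × (Fin d → ℝ) => (4 * π * q.1) ^ (-(d : ℝ) / 2)
        * exp (-(∑ i, q.2 i ^ 2) / (4 * q.1))) p :=
      ((contDiff_const.mul contDiff_fst).contDiffAt.rpow_const_of_ne (by positivity)).mul
        ((contDiff_sum_sq_snd d).contDiffAt.neg.div (contDiff_const.mul contDiff_fst).contDiffAt
          (by positivity)).exp
    refine hsmooth.congr_of_eventuallyEq ?_
    filter_upwards [(isOpen_lt continuous_const continuous_fst).mem_nhds ht] with q (hq : 0 < q.1)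
    rw [heatK, if_pos hq]

lemma contDiffOn_heatK (d : ℕ) : ContDiffOn ℝ ∞ (heatK d) {0}ᶜ :=
  fun _ hp => (contDiffAt_heatK hp).contDiffWithinAt

section PartialDerivatives

variable {d : ℕ} {F : ℝ × (Fin d → ℝ) → ℝ} {U : Set (ℝ × (Fin d → ℝ))}

lemma pderivT_eq_fderiv_apply {p : ℝ × (Fin d → ℝ)} (hF : DifferentiableAt ℝ F p) :
    pderivT F p = fderiv ℝ F p (1, 0) :=
  (hF.hasFDerivAt.comp_hasDerivAt p.1
    ((hasDerivAt_id p.1).prodMk (hasDerivAt_const p.1 p.2))).deriv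

lemma pderivX_eq_fderiv_apply {p : ℝ × (Fin d → ℝ)} (i : Fin d) (hF : DifferentiableAt ℝ F p) :
    pderivX i F p = fderiv ℝ F p (0, Pi.single i 1) := by
  have hF' : DifferentiableAt ℝ F (p.1, Function.update p.2 i (p.2 i)) := by
    rwa [Function.update_eq_self]
  have hline := (hasDerivAt_const (p.2 i) p.1).prodMk (hasDerivAt_update p.2 i (p.2 i))
  have hcomp : HasDerivAt (fun s => F (p.1, Function.update p.2 i s))
      (fderiv ℝ F (p.1, Function.update p.2 i (p.2 i)) (0, Pi.single i 1)) (p.2 i) :=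
    hF'.hasFDerivAt.comp_hasDerivAt (p.2 i) hline
  rw [pderivX, hcomp.deriv, Function.update_eq_self]

lemma contDiffOn_pderivT (hU : IsOpen U) (hF : ContDiffOn ℝ ∞ F U) :
    ContDiffOn ℝ ∞ (pderivT F) U :=
  ((hF.fderiv_of_isOpen hU le_rfl).clm_apply contDiffOn_const).congr fun p hp =>
    pderivT_eq_fderiv_apply ((hF.contDiffAt (hU.mem_nhds hp)).differentiableAt (by simp))

lemma contDiffOn_pderivX (i : Fin d) (hU : IsOpen U) (hF : ContDiffOn ℝ ∞ F U) :
    ContDiffOn ℝ ∞ (pderivX i F) U :=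
  ((hF.fderiv_of_isOpen hU le_rfl).clm_apply contDiffOn_const).congr fun p hp =>
    pderivX_eq_fderiv_apply i ((hF.contDiffAt (hU.mem_nhds hp)).differentiableAt (by simp))

lemma contDiffOn_pmixed (hU : IsOpen U) (hF : ContDiffOn ℝ ∞ F U) (l : ℕ) (k : Fin d → ℕ) :
    ContDiffOn ℝ ∞ (pmixed l k F) U := by
  have hfoldr : ∀ L : List (Fin d),
      ContDiffOn ℝ ∞ (L.foldr (fun i G => (pderivX i)^[k i] G) F) U := by
    intro L
    induction L with
    | nil => exact hF
    | cons i L ih =>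
      exact Function.Iterate.rec (ContDiffOn ℝ ∞ · U) ih (fun _ => contDiffOn_pderivX i hU) (k i)
  exact Function.Iterate.rec (ContDiffOn ℝ ∞ · U) (hfoldr _) (fun _ => contDiffOn_pderivT hU) l

end PartialDerivatives

def IsParabolicHomogeneous {d : ℕ} (m : ℝ) (F : ℝ × (Fin d → ℝ) → ℝ) : Prop :=
  ∀ c : ℝ, 0 < c → ∀ (t : ℝ) (x : Fin d → ℝ), F (c ^ 2 * t, c • x) = c ^ m * F (t, x)

section Homogeneity

variable {d : ℕ} {m : ℝ} {F : ℝ × (Fin d → ℝ) → ℝ}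

lemma isParabolicHomogeneous_heatK (d : ℕ) : IsParabolicHomogeneous (-(d : ℝ)) (heatK d) := by
  intro c hc t x
  by_cases ht : 0 < t
  · have hsum : ∑ i, (c • x) i ^ 2 = c ^ 2 * ∑ i, x i ^ 2 := by
      simp only [Pi.smul_apply, smul_eq_mul, mul_pow, Finset.mul_sum]
    have hexp : -(c ^ 2 * ∑ i, x i ^ 2) / (4 * (c ^ 2 * t)) = -(∑ i, x i ^ 2) / (4 * t) := by
      field_simp
    have hpow : (4 * π * (c ^ 2 * t)) ^ (-(d : ℝ) / 2)
        = c ^ (-(d : ℝ)) * (4 * π * t) ^ (-(d : ℝ) / 2) := by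
      rw [show 4 * π * (c ^ 2 * t) = c ^ 2 * (4 * π * t) by ring,
        mul_rpow (by positivity) (by positivity), ← rpow_natCast, ← rpow_mul hc.le]
      congr 2
      push_cast
      ring
    simp only [heatK, if_pos ht, if_pos (by positivity : 0 < c ^ 2 * t), hsum, hexp, hpow]
    ring
  · have hct : ¬ 0 < c ^ 2 * t := fun h => ht (pos_of_mul_pos_right h (by positivity))
    simp only [heatK, if_neg ht, if_neg hct, mul_zero]

lemma isParabolicHomogeneous_pderivT (hF : IsParabolicHomogeneous m F) :
    IsParabolicHomogeneous (m - 2) (pderivT F) := by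
  intro c hc t x
  have hc2 : c ^ 2 ≠ 0 := by positivity
  have hline : (fun s => F (s, c • x)) = fun s => c ^ m * F ((c ^ 2)⁻¹ * s, x) := by
    ext s
    rw [← hF c hc, mul_inv_cancel_left₀ hc2]
  show deriv (fun s => F (s, c • x)) (c ^ 2 * t) = c ^ (m - 2) * deriv (fun s => F (s, x)) t
  rw [hline, deriv_const_mul_field, deriv_comp_mul_left (c ^ 2)⁻¹ (fun s => F (s, x)),
    inv_mul_cancel_left₀ hc2, rpow_sub hc, rpow_two, smul_eq_mul, div_eq_mul_inv, mul_assoc]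

lemma isParabolicHomogeneous_pderivX (i : Fin d) (hF : IsParabolicHomogeneous m F) :
    IsParabolicHomogeneous (m - 1) (pderivX i F) := by
  intro c hc t x
  have hline : (fun s => F (c ^ 2 * t, Function.update (c • x) i s))
      = fun s => c ^ m * F (t, Function.update x i (c⁻¹ * s)) := by
    ext s
    rw [← hF c hc, ← Function.update_smul, smul_eq_mul, mul_inv_cancel_left₀ hc.ne']
  show deriv (fun s => F (c ^ 2 * t, Function.update (c • x) i s)) (c * x i)
    = c ^ (m - 1) * deriv (fun s => F (t, Function.update x i s)) (x i)
  rw [hline, deriv_const_mul_field, deriv_comp_mul_left c⁻¹ (fun s => F (t, Function.update x i s)),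
    inv_mul_cancel_left₀ hc.ne', rpow_sub_one hc.ne', smul_eq_mul, div_eq_mul_inv]
  ring

lemma isParabolicHomogeneous_iterate_pderivT (hF : IsParabolicHomogeneous m F) (n : ℕ) :
    IsParabolicHomogeneous (m - 2 * n) (pderivT^[n] F) := by
  induction n with
  | zero => simpa using hF
  | succ n ih =>
    rw [Function.iterate_succ_apply', Nat.cast_succ, mul_add_one, ← sub_sub]
    exact isParabolicHomogeneous_pderivT ih

lemma isParabolicHomogeneous_iterate_pderivX (i : Fin d) (hF : IsParabolicHomogeneous m F)
    (n : ℕ) : IsParabolicHomogeneous (m - n) ((pderivX i)^[n] F) := by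
  induction n with
  | zero => simpa using hF
  | succ n ih =>
    rw [Function.iterate_succ_apply', Nat.cast_succ, ← sub_sub]
    exact isParabolicHomogeneous_pderivX i ih

lemma isParabolicHomogeneous_pmixed (hF : IsParabolicHomogeneous m F) (l : ℕ) (k : Fin d → ℕ) :
    IsParabolicHomogeneous (m - 2 * l - ((∑ i, k i : ℕ) : ℝ)) (pmixed l k F) := by
  have hfoldr : ∀ L : List (Fin d), IsParabolicHomogeneous (m - ((L.map k).sum : ℕ))
      (L.foldr (fun i G => (pderivX i)^[k i] G) F) := by
    intro L
    induction L with
    | nil => simpa using hF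
    | cons i L ih =>
      rw [List.map_cons, List.sum_cons, Nat.cast_add, add_comm, ← sub_sub]
      exact isParabolicHomogeneous_iterate_pderivX i ih (k i)
  rw [sub_right_comm, Fin.sum_univ_def]
  exact isParabolicHomogeneous_iterate_pderivT (hfoldr _) l

end Homogeneity

def parabolicSphere (d : ℕ) : Set (ℝ × (Fin d → ℝ)) := {p | |p.1| + ∑ i, p.2 i ^ 2 = 1}

lemma isCompact_parabolicSphere (d : ℕ) : IsCompact (parabolicSphere d) := by
  have hclosed : IsClosed (parabolicSphere d) :=
    isClosed_eq (continuous_fst.abs.add (contDiff_sum_sq_snd d).continuous) continuous_const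
  refine ((isCompact_Icc (a := -1) (b := 1)).prod
    (isCompact_univ_pi fun _ => isCompact_Icc (a := (-1 : ℝ)) (b := 1))).of_isClosed_subset
    hclosed fun p (hp : |p.1| + ∑ i, p.2 i ^ 2 = 1) => ⟨?_, fun i _ => ?_⟩
  · have := Finset.sum_nonneg fun i (_ : i ∈ Finset.univ) => sq_nonneg (p.2 i)
    exact abs_le.1 (by linarith)
  · have := Finset.single_le_sum (fun j _ => sq_nonneg (p.2 j)) (Finset.mem_univ i)
    exact abs_le.1 (abs_le_one_iff_mul_self_le_one.2 (by nlinarith [abs_nonneg p.1]))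

lemma zero_notMem_parabolicSphere (d : ℕ) : (0 : ℝ × (Fin d → ℝ)) ∉ parabolicSphere d := by
  simp [parabolicSphere]

lemma abs_add_sum_sq_pos {d : ℕ} {p : ℝ × (Fin d → ℝ)} (hp : p ≠ 0) :
    0 < |p.1| + ∑ i, p.2 i ^ 2 := by
  by_cases ht : p.1 = 0
  · exact add_pos_of_nonneg_of_pos (abs_nonneg _)
      (sum_sq_pos_of_ne_zero fun hx => hp (Prod.ext ht hx))
  · exact add_pos_of_pos_of_nonneg (abs_pos.2 ht) (Finset.sum_nonneg fun i _ => sq_nonneg _)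

lemma abs_add_sum_sq_scale {d : ℕ} (c t : ℝ) (x : Fin d → ℝ) :
    |c ^ 2 * t| + ∑ i, (c • x) i ^ 2 = c ^ 2 * (|t| + ∑ i, x i ^ 2) := by
  simp only [abs_mul, abs_pow, sq_abs, Pi.smul_apply, smul_eq_mul, mul_pow, mul_add,
    Finset.mul_sum]

lemma IsParabolicHomogeneous.exists_bound {d : ℕ} {m : ℝ} {F : ℝ × (Fin d → ℝ) → ℝ}
    (hF : IsParabolicHomogeneous m F) (hcont : ContinuousOn F {0}ᶜ) :
    ∃ C : ℝ, 0 < C ∧ ∀ (t : ℝ) (x : Fin d → ℝ), (t, x) ≠ (0, 0) →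
      |F (t, x)| ≤ C * ((|t| + ∑ i, x i ^ 2) ^ ((1 : ℝ) / 2)) ^ m := by
  obtain ⟨C, hC⟩ := (isCompact_parabolicSphere d).exists_bound_of_continuousOn
    (hcont.mono fun p hp h0 => zero_notMem_parabolicSphere d (h0 ▸ hp))
  refine ⟨max C 1, by positivity, fun t x hne => ?_⟩
  rw [← sqrt_eq_rpow]
  set ρ := √(|t| + ∑ i, x i ^ 2)
  have hQ := abs_add_sum_sq_pos hne
  have hρ : 0 < ρ := sqrt_pos.2 hQ
  have hmem : ((ρ⁻¹) ^ 2 * t, ρ⁻¹ • x) ∈ parabolicSphere d := by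
    show |(ρ⁻¹) ^ 2 * t| + ∑ i, (ρ⁻¹ • x) i ^ 2 = 1
    rw [abs_add_sum_sq_scale, inv_pow, sq_sqrt hQ.le, inv_mul_cancel₀ hQ.ne']
  have hscale : F (t, x) = ρ ^ m * F ((ρ⁻¹) ^ 2 * t, ρ⁻¹ • x) := by
    rw [← hF ρ hρ, ← mul_assoc, ← mul_pow, mul_inv_cancel₀ hρ.ne', one_pow, one_mul,
      smul_inv_smul₀ hρ.ne']
  calc |F (t, x)| = ρ ^ m * |F ((ρ⁻¹) ^ 2 * t, ρ⁻¹ • x)| := by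
        rw [hscale, abs_mul, abs_of_pos (rpow_pos_of_pos hρ m)]
    _ ≤ ρ ^ m * max C 1 := by
        gcongr
        exact (hC _ hmem).trans (le_max_left C 1)
    _ = max C 1 * ρ ^ m := mul_comm _ _

/-- Parabolic scaling bound for the heat kernel: for every `l ∈ ℕ`, `k ∈ ℕ^d`
there is `C(d,l,k)` such that `|∂_t^l ∂_x^k Φ(t,x)| ≤ C · ‖(t,x)‖_𝔰^{−d−2l−|k|₁}` for all
`(t,x) ≠ 0`, where `‖(t,x)‖_𝔰 = (|t| + |x|²)^{1/2}` is the parabolic metric. -/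
theorem heat_kernel_parabolic_scaling_bound (d l : ℕ) (k : Fin d → ℕ) :
    ∃ C : ℝ, 0 < C ∧ ∀ (t : ℝ) (x : Fin d → ℝ), (t, x) ≠ (0, 0) →
      |pmixed l k (heatK d) (t, x)|
        ≤ C * ((|t| + ∑ i, (x i) ^ 2) ^ ((1 : ℝ) / 2))
            ^ (-(d : ℝ) - 2 * (l : ℝ) - ((∑ i, k i : ℕ) : ℝ)) :=
  (isParabolicHomogeneous_pmixed (isParabolicHomogeneous_heatK d) l k).exists_bound
    (contDiffOn_pmixed isOpen_compl_singleton (contDiffOn_heatK d) l k).continuousOn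
end

section
/- (Regularized porous-medium coefficient) Fix M with 1 < M < 2 and ε > 0. Let a(v) = M|v|^{M−1} and define a_ε by: a_ε(v) = a(v) for |v| ≥ ε, and a_ε(v) = p₄v⁴ + p₂v² + p₀ for |v| ≤ ε, where p₄ = M(M−1)(M−3)ε^{M−5}/8, p₂ = M(M−1)(5−M)ε^{M−3}/4, p₀ = M(1 − (M−1)(7−M)/8)ε^{M−1}. Then a_ε ∈ C²(ℝ) (i.e., a_ε, a_ε', a_ε'' match at v = ±ε), a_ε(v) ≥ p₀ > 0 for all v, and a_ε(v) ≥ a(v) for all v. -/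
/-!
Put β = (M - 1) / 2 and y = (v / ε)². Then a(v) = M ε^(M-1) y^β, and the quartic equals
M ε^(M-1) T(y) with T the second-order Taylor polynomial of y ↦ y^β at y = 1. Hence
a_ε(v) = M ε^(M-1) G((v / ε)²), where G glues T (for y < 1) to y^β (for y ≥ 1); G is C² because
the two pieces agree to second order at 1. The difference T(y) - y^β vanishes to second order at 1
and its third derivative -β(β-1)(β-2) y^(β-3) is negative for 0 < β < 1, so T ≥ y^β on (0, 1].
Finally T is increasing on [0, 1], so G ≥ T(0) = (1 - β)(2 - β)/2 > 0 on [0, ∞).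
-/

open Set

section Gluing

variable {𝕜 F α : Type*} [NontriviallyNormedField 𝕜] [NormedAddCommGroup F] [NormedSpace 𝕜 F]
  [TopologicalSpace α] [LinearOrder α] [OrderClosedTopology α]

theorem hasDerivAt_ite_le {p q : 𝕜 → α} (hp : Continuous p) (hq : Continuous q)
    {f g f' g' : 𝕜 → F} (hf : ∀ x, p x ≤ q x → HasDerivAt f (f' x) x)
    (hg : ∀ x, q x ≤ p x → HasDerivAt g (g' x) x) (hfg : ∀ x, p x = q x → f x = g x)
    (hfg' : ∀ x, p x = q x → f' x = g' x) (x : 𝕜) :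
    HasDerivAt (fun x => if p x ≤ q x then f x else g x) (if p x ≤ q x then f' x else g' x) x := by
  rcases lt_trichotomy (p x) (q x) with hlt | heq | hgt
  · rw [if_pos hlt.le]
    refine (hf x hlt.le).congr_of_eventuallyEq ?_
    filter_upwards [hp.continuousAt.eventually_lt hq.continuousAt hlt] with y hy
    exact if_pos hy.le
  · rw [if_pos heq.le]
    have hle : HasDerivWithinAt (fun x => if p x ≤ q x then f x else g x) (f' x)
        {y | p y ≤ q y} x :=
      (hf x heq.le).hasDerivWithinAt.congr (fun y hy => if_pos hy) (if_pos heq.le)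
    have hge : HasDerivWithinAt (fun x => if p x ≤ q x then f x else g x) (f' x)
        {y | q y ≤ p y} x := by
      rw [hfg' x heq]
      refine (hg x heq.ge).hasDerivWithinAt.congr (fun y hy => ?_) ?_
      · split_ifs with h
        exacts [hfg y (h.antisymm hy), rfl]
      · rw [if_pos heq.le, hfg x heq]
    simpa [← ofPred_or, le_total] using hle.union hge
  · rw [if_neg hgt.not_ge]
    refine (hg x hgt.le).congr_of_eventuallyEq ?_
    filter_upwards [hq.continuousAt.eventually_lt hp.continuousAt hgt] with y hy
    exact if_neg hy.not_ge

theorem contDiff_two_of_hasDerivAt {f f' f'' : 𝕜 → F} (hf : ∀ x, HasDerivAt f (f' x) x)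
    (hf' : ∀ x, HasDerivAt f' (f'' x) x) (hf'' : Continuous f'') : ContDiff 𝕜 2 f := by
  rw [show (2 : WithTop ℕ∞) = 1 + 1 from rfl, contDiff_succ_iff_deriv, contDiff_one_iff_deriv,
    funext fun x => (hf x).deriv, funext fun x => (hf' x).deriv]
  exact ⟨fun x => (hf x).differentiableAt, by simp, fun x => (hf' x).differentiableAt, hf''⟩

end Gluing

theorem antitoneOn_Ioc_of_hasDerivAt {f f' : ℝ → ℝ} {a b : ℝ}
    (hf : ∀ x ∈ Ioc a b, HasDerivAt f (f' x) x) (hf' : ∀ x ∈ Ioo a b, f' x ≤ 0) :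
    AntitoneOn f (Ioc a b) := by
  refine antitoneOn_of_hasDerivWithinAt_nonpos (f' := f') (convex_Ioc a b)
    (fun x hx => (hf x hx).continuousAt.continuousWithinAt) (fun x hx => ?_) ?_
  · rw [interior_Ioc] at hx
    exact (hf x (Ioo_subset_Ioc_self hx)).hasDerivWithinAt
  · rwa [interior_Ioc]

noncomputable def rpowTaylor (β y : ℝ) : ℝ := 1 + β * (y - 1) + β * (β - 1) / 2 * (y - 1) ^ 2

noncomputable def rpowGlued (β y : ℝ) : ℝ := if 1 ≤ y then y ^ β else rpowTaylor β y

theorem rpowTaylor_zero (β : ℝ) : rpowTaylor β 0 = (1 - β) * (2 - β) / 2 := by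
  unfold rpowTaylor; ring

theorem hasDerivAt_rpowTaylor (β x : ℝ) :
    HasDerivAt (rpowTaylor β) (β + β * (β - 1) * (x - 1)) x := by
  have hlin := (hasDerivAt_id x).sub_const 1
  exact ((hlin.const_mul β).const_add 1 |>.add ((hlin.pow 2).const_mul (β * (β - 1) / 2)))
    |>.congr_deriv
      (by simp only [mul_one, Nat.cast_ofNat, id_eq, Nat.add_one_sub_one, pow_one]; ring)

theorem contDiff_rpowGlued (β : ℝ) : ContDiff ℝ 2 (rpowGlued β) := by
  have hd₀ := hasDerivAt_ite_le (p := fun _ => (1 : ℝ)) (q := fun y => y)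
    continuous_const continuous_id (f := fun y => y ^ β) (g := rpowTaylor β)
    (f' := fun y => β * y ^ (β - 1)) (g' := fun y => β + β * (β - 1) * (y - 1))
    (fun x hx => Real.hasDerivAt_rpow_const (Or.inl (one_pos.trans_le hx).ne'))
    (fun x _ => hasDerivAt_rpowTaylor β x)
    (fun x hx => by simp [← hx, rpowTaylor]) (fun x hx => by simp [← hx])
  have hd₁ := hasDerivAt_ite_le (p := fun _ => (1 : ℝ)) (q := fun y => y)
    continuous_const continuous_id (f := fun y => β * y ^ (β - 1))
    (g := fun y => β + β * (β - 1) * (y - 1))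
    (f' := fun y => β * (β - 1) * y ^ (β - 2)) (g' := fun _ => β * (β - 1))
    (fun x hx => ((Real.hasDerivAt_rpow_const (p := β - 1)
      (Or.inl (one_pos.trans_le hx).ne')).const_mul β).congr_deriv (by norm_num [sub_sub]; ring))
    (fun x _ => by
      simpa using ((hasDerivAt_id x).sub_const 1).const_mul (β * (β - 1)) |>.const_add β)
    (fun x hx => by simp [← hx]) (fun x hx => by simp [← hx])
  refine contDiff_two_of_hasDerivAt hd₀ hd₁ <| continuous_if_le continuous_const continuous_id ?_
    continuousOn_const fun x hx => by simp [← hx]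
  exact fun x hx => ((Real.continuousAt_rpow_const _ _
    (Or.inl (one_pos.trans_le hx).ne')).const_mul _).continuousWithinAt

theorem rpow_le_rpowTaylor {β y : ℝ} (hβ : 0 ≤ β * (β - 1) * (β - 2)) (hy₀ : 0 < y)
    (hy₁ : y ≤ 1) : y ^ β ≤ rpowTaylor β y := by
  have hy : y ∈ Ioc (0 : ℝ) 1 := ⟨hy₀, hy₁⟩
  have hrpow (c : ℝ) {x : ℝ} (hx : x ∈ Ioc (0 : ℝ) 1) :
      HasDerivAt (fun y : ℝ => y ^ (β - c)) ((β - c) * x ^ (β - (c + 1))) x :=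
    (Real.hasDerivAt_rpow_const (Or.inl hx.1.ne')).congr_deriv (by rw [sub_sub])
  have hd₂ : ∀ x ∈ Ioc (0 : ℝ) 1, 0 ≤ β * (β - 1) - β * (β - 1) * x ^ (β - 2) := by
    have hanti := antitoneOn_Ioc_of_hasDerivAt
      (f := fun x => β * (β - 1) - β * (β - 1) * x ^ (β - 2))
      (f' := fun x => -(β * (β - 1) * (β - 2) * x ^ (β - 3)))
      (fun x hx => (((hrpow 2 hx).const_mul (β * (β - 1))).const_sub _).congr_deriv
        (by ring_nf))
      (fun x hx => neg_nonpos.2 (mul_nonneg hβ (Real.rpow_nonneg hx.1.le _)))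
    intro x hx
    simpa using hanti hx (right_mem_Ioc.2 one_pos) hx.2
  have hd₁ : ∀ x ∈ Ioc (0 : ℝ) 1, β + β * (β - 1) * (x - 1) - β * x ^ (β - 1) ≤ 0 := by
    have hanti := antitoneOn_Ioc_of_hasDerivAt
      (f := fun x => -(β + β * (β - 1) * (x - 1) - β * x ^ (β - 1)))
      (f' := fun x => -(β * (β - 1) - β * (β - 1) * x ^ (β - 2)))
      (fun x hx => ((((hasDerivAt_id x).sub_const 1).const_mul (β * (β - 1))).const_add β
        |>.sub ((hrpow 1 hx).const_mul β) |>.neg).congr_deriv (by ring_nf))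
      (fun x hx => neg_nonpos.2 (hd₂ x (Ioo_subset_Ioc_self hx)))
    intro x hx
    simpa using hanti hx (right_mem_Ioc.2 one_pos) hx.2
  have hanti := antitoneOn_Ioc_of_hasDerivAt
    (f := fun x => rpowTaylor β x - x ^ β)
    (f' := fun x => β + β * (β - 1) * (x - 1) - β * x ^ (β - 1))
    (fun x hx => ((hasDerivAt_rpowTaylor β x).sub
      (Real.hasDerivAt_rpow_const (Or.inl hx.1.ne'))))
    (fun x hx => hd₁ x (Ioo_subset_Ioc_self hx))
  simpa [rpowTaylor] using hanti hy (right_mem_Ioc.2 one_pos) hy₁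

theorem rpow_le_rpowGlued {β y : ℝ} (hβ₀ : 0 < β) (hβ₁ : β ≤ 1) (hy : 0 ≤ y) :
    y ^ β ≤ rpowGlued β y := by
  unfold rpowGlued
  split_ifs with h
  · exact le_rfl
  rcases hy.eq_or_lt with rfl | hy₀
  · rw [Real.zero_rpow hβ₀.ne', rpowTaylor_zero]
    exact div_nonneg (mul_nonneg (by linarith) (by linarith)) zero_le_two
  · exact rpow_le_rpowTaylor (mul_nonneg_of_nonpos_of_nonpos
      (mul_nonpos_of_nonneg_of_nonpos hβ₀.le (by linarith)) (by linarith)) hy₀ (not_le.1 h).le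

theorem rpowTaylor_zero_le_rpowGlued {β y : ℝ} (hβ₀ : 0 ≤ β) (hβ₁ : β ≤ 1) (hy : 0 ≤ y) :
    rpowTaylor β 0 ≤ rpowGlued β y := by
  unfold rpowGlued
  split_ifs with h
  · rw [rpowTaylor_zero]
    nlinarith [Real.one_le_rpow h hβ₀]
  · unfold rpowTaylor
    nlinarith [mul_nonneg hβ₀ hy, mul_nonneg (mul_nonneg hβ₀ hy) (sub_nonneg.2 hβ₁)]

theorem abs_rpow_eq_rpow_mul_sq_div_rpow {ε : ℝ} (hε : 0 < ε) (γ v : ℝ) :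
    |v| ^ γ = ε ^ γ * ((v / ε) ^ 2) ^ (γ / 2) := by
  rw [← sq_abs, ← Real.rpow_natCast, ← Real.rpow_mul (abs_nonneg _), abs_div, abs_of_pos hε,
    Real.div_rpow (abs_nonneg v) hε.le]
  push_cast
  rw [mul_div_cancel₀ _ two_ne_zero]
  field_simp

theorem one_le_sq_div_iff {ε : ℝ} (hε : 0 < ε) (v : ℝ) : 1 ≤ (v / ε) ^ 2 ↔ ε ≤ |v| := by
  rw [one_le_sq_iff_one_le_abs, abs_div, abs_of_pos hε, one_le_div hε]

theorem quartic_eq_mul_rpowTaylor (M : ℝ) {ε : ℝ} (hε : 0 < ε) (v : ℝ) :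
    M * (M - 1) * (M - 3) * ε ^ (M - 5) / 8 * v ^ 4 +
        M * (M - 1) * (5 - M) * ε ^ (M - 3) / 4 * v ^ 2 +
        M * (1 - (M - 1) * (7 - M) / 8) * ε ^ (M - 1) =
      M * ε ^ (M - 1) * rpowTaylor ((M - 1) / 2) ((v / ε) ^ 2) := by
  have h₄ : ε ^ (M - 5) = ε ^ (M - 1) / ε ^ 4 := by
    rw [← Real.rpow_sub_natCast hε.ne']; ring_nf
  have h₂ : ε ^ (M - 3) = ε ^ (M - 1) / ε ^ 2 := by
    rw [← Real.rpow_sub_natCast hε.ne']; ring_nf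
  rw [h₄, h₂, rpowTaylor]
  field_simp
  ring

/-- Regularized porous-medium coefficient: for `1 < M < 2`, `ε > 0`,
`a(v) = M|v|^{M−1}` and the quartic replacement `a_ε` on `[−ε,ε]` with coefficients
`p₄ = M(M−1)(M−3)ε^{M−5}/8`, `p₂ = M(M−1)(5−M)ε^{M−3}/4`,
`p₀ = M(1 − (M−1)(7−M)/8)ε^{M−1}`, one has `a_ε ∈ C²(ℝ)`, `a_ε ≥ p₀ > 0`, and `a_ε ≥ a`. -/
theorem regularized_porous_medium_coefficient (M ε : ℝ) (hM1 : 1 < M) (hM2 : M < 2)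
    (hε : 0 < ε) :
    let a : ℝ → ℝ := fun v => M * |v| ^ (M - 1)
    let p₄ : ℝ := M * (M - 1) * (M - 3) * ε ^ (M - 5) / 8
    let p₂ : ℝ := M * (M - 1) * (5 - M) * ε ^ (M - 3) / 4
    let p₀ : ℝ := M * (1 - (M - 1) * (7 - M) / 8) * ε ^ (M - 1)
    let aε : ℝ → ℝ := fun v => if ε ≤ |v| then a v else p₄ * v ^ 4 + p₂ * v ^ 2 + p₀
    ContDiff ℝ 2 aε ∧ 0 < p₀ ∧ (∀ v : ℝ, p₀ ≤ aε v) ∧ (∀ v : ℝ, a v ≤ aε v) := by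
  intro a p₄ p₂ p₀ aε
  have hc : 0 < M * ε ^ (M - 1) := mul_pos (by linarith) (Real.rpow_pos_of_pos hε _)
  have ha : ∀ v, a v = M * ε ^ (M - 1) * ((v / ε) ^ 2) ^ ((M - 1) / 2) := fun v => by
    simp only [a, abs_rpow_eq_rpow_mul_sq_div_rpow hε, mul_assoc]
  have hp₀ : p₀ = M * ε ^ (M - 1) * rpowTaylor ((M - 1) / 2) 0 := by
    simpa using quartic_eq_mul_rpowTaylor M hε 0
  have haε : aε = fun v => M * ε ^ (M - 1) * rpowGlued ((M - 1) / 2) ((v / ε) ^ 2) := by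
    ext v
    simp only [aε, p₄, p₂, p₀, rpowGlued, one_le_sq_div_iff hε, mul_ite, ← ha,
      quartic_eq_mul_rpowTaylor M hε]
  refine ⟨?_, ?_, fun v => ?_, fun v => ?_⟩
  · rw [haε]
    exact contDiff_const.mul ((contDiff_rpowGlued _).comp (by fun_prop))
  · rw [hp₀, rpowTaylor_zero]
    exact mul_pos hc (by nlinarith)
  · rw [hp₀, haε]
    exact mul_le_mul_of_nonneg_left
      (rpowTaylor_zero_le_rpowGlued (by linarith) (by linarith) (sq_nonneg _)) hc.le
  · rw [ha, haε]
    exact mul_le_mul_of_nonneg_left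
      (rpow_le_rpowGlued (by linarith) (by linarith) (sq_nonneg _)) hc.le
end

section
/- For 1 < M < 2 and ε > 0, the regularized coefficient a_ε from the quartic matching construction satisfies |a_ε'(v)| ≤ |a'(v)| for all v ≠ 0, where a(v) = M|v|^{M−1} so a'(v) = M(M−1)sign(v)|v|^{M−2}. -/
/-!
Both `a_ε` and `a` are even, so it suffices to take `v > 0`. For `v ≥ ε` the derivatives agree:
at `v = ε` the quartic matches `a` to first order. For `0 < v < ε` put `t = v / ε`, `p = M - 2`
and `α = (1 - p) / 2 ∈ [0, 1]`; after rescaling, the claim is `0 ≤ t (1 - α (t² - 1)) ≤ t ^ p`.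
Multiplying by `t ^ (1 - p) = (t²) ^ α ≤ 1 + α (t² - 1)` (Bernoulli) turns the right-hand side
into `t (1 - α² (t² - 1)²) ≤ t`.
-/

open Set Topology

noncomputable def matchingQuartic (M ε w : ℝ) : ℝ :=
  (M * (M - 1) * (M - 3) * ε ^ (M - 5) / 8) * w ^ 4
    + (M * (M - 1) * (5 - M) * ε ^ (M - 3) / 4) * w ^ 2
    + M * (1 - (M - 1) * (7 - M) / 8) * ε ^ (M - 1)

noncomputable def regularizedCoeff (M ε w : ℝ) : ℝ :=
  if ε ≤ |w| then M * |w| ^ (M - 1) else matchingQuartic M ε w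

/-- The derivative of `matchingQuartic M ε` in the rescaled variable `t = w / ε`, normalised by
`a'(ε) = M (M - 1) ε ^ (M - 2)`, with `p = M - 2`. -/
noncomputable def quarticSlope (p t : ℝ) : ℝ := ((p - 1) * t ^ 3 + (3 - p) * t) / 2

theorem Function.Even.deriv_neg {f : ℝ → ℝ} (hf : f.Even) (x : ℝ) :
    deriv f (-x) = -deriv f x := by
  have h := deriv_comp_neg (f := f) (-x)
  rwa [show (fun y ↦ f (-y)) = f from funext hf, neg_neg] at h

theorem Function.Even.abs_deriv_abs {f : ℝ → ℝ} (hf : f.Even) (x : ℝ) :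
    |deriv f (|x|)| = |deriv f x| := by
  rcases abs_choice x with h | h <;> rw [h]
  rw [hf.deriv_neg, abs_neg]

theorem HasDerivAt.ite_le {f g : ℝ → ℝ} {c d : ℝ} (hf : HasDerivAt f d c)
    (hg : HasDerivAt g d c) (hfg : f c = g c) :
    HasDerivAt (fun x ↦ if c ≤ x then f x else g x) d c := by
  have hright : HasDerivWithinAt (fun x ↦ if c ≤ x then f x else g x) d (Ici c) c :=
    hf.hasDerivWithinAt.congr_of_mem (fun x hx ↦ if_pos hx) (mem_Ici.mpr le_rfl)
  have hleft : HasDerivWithinAt (fun x ↦ if c ≤ x then f x else g x) d (Iic c) c := by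
    refine hg.hasDerivWithinAt.congr_of_mem (fun x hx ↦ ?_) (mem_Iic.mpr le_rfl)
    rcases (mem_Iic.mp hx).lt_or_eq with hlt | rfl
    · exact if_neg hlt.not_ge
    · exact (if_pos le_rfl).trans hfg
  simpa only [Iic_union_Ici, hasDerivWithinAt_univ] using hleft.union hright

theorem hasDerivAt_const_mul_rpow_sub_one (M : ℝ) {x : ℝ} (hx : 0 < x) :
    HasDerivAt (fun w ↦ M * w ^ (M - 1)) (M * (M - 1) * x ^ (M - 2)) x := by
  have h := (Real.hasDerivAt_rpow_const (p := M - 1) (Or.inl hx.ne')).const_mul M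
  rwa [show M - 1 - 1 = M - 2 by ring, ← mul_assoc] at h

theorem abs_quarticSlope_le_rpow {p t : ℝ} (hp₁ : -1 ≤ p) (hp₂ : p ≤ 1) (ht₀ : 0 < t)
    (ht₁ : t ≤ 1) : |quarticSlope p t| ≤ t ^ p := by
  set α := (1 - p) / 2
  have hslope : quarticSlope p t = t * (1 - α * (t ^ 2 - 1)) := by
    simp only [quarticSlope, α]; ring
  have hsq : t ^ 2 ≤ 1 := pow_le_one₀ ht₀.le ht₁
  have hnonneg : 0 ≤ quarticSlope p t := by
    rw [hslope]; exact mul_nonneg ht₀.le (by nlinarith [show 0 ≤ α by simp only [α]; linarith])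
  have hbernoulli : t ^ (1 - p) ≤ 1 + α * (t ^ 2 - 1) := by
    have h := rpow_one_add_le_one_add_mul_self (s := t ^ 2 - 1) (by nlinarith)
      (p := α) (by simp only [α]; linarith) (by simp only [α]; linarith)
    have hpow : (1 + (t ^ 2 - 1)) ^ α = t ^ (1 - p) := by
      rw [add_sub_cancel, ← Real.rpow_natCast, ← Real.rpow_mul ht₀.le]
      congr 1; simp only [α]; push_cast; ring
    rwa [hpow] at h
  have hpos : 0 < t ^ (1 - p) := Real.rpow_pos_of_pos ht₀ _
  rw [abs_of_nonneg hnonneg]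
  refine le_of_mul_le_mul_right ?_ hpos
  calc quarticSlope p t * t ^ (1 - p)
      ≤ t * (1 - α * (t ^ 2 - 1)) * (1 + α * (t ^ 2 - 1)) := by
        rw [hslope]; exact mul_le_mul_of_nonneg_left hbernoulli (hslope ▸ hnonneg)
    _ ≤ t := by nlinarith [sq_nonneg (α * (t ^ 2 - 1))]
    _ = t ^ p * t ^ (1 - p) := by rw [← Real.rpow_add ht₀, add_sub_cancel, Real.rpow_one]

theorem quarticSlope_one (p : ℝ) : quarticSlope p 1 = 1 := by
  simp only [quarticSlope]; ring

theorem matchingQuartic_self {M ε : ℝ} (hε : 0 < ε) :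
    matchingQuartic M ε ε = M * ε ^ (M - 1) := by
  have h₄ : ε ^ (M - 5) = ε ^ (M - 1) / ε ^ 4 := by
    rw [← Real.rpow_natCast, ← Real.rpow_sub hε]; congr 1; push_cast; ring
  have h₂ : ε ^ (M - 3) = ε ^ (M - 1) / ε ^ 2 := by
    rw [← Real.rpow_natCast, ← Real.rpow_sub hε]; congr 1; push_cast; ring
  simp only [matchingQuartic, h₄, h₂]
  field_simp
  ring

theorem hasDerivAt_matchingQuartic (M : ℝ) {ε : ℝ} (hε : 0 < ε) (w : ℝ) :
    HasDerivAt (matchingQuartic M ε)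
      (M * (M - 1) * ε ^ (M - 2) * quarticSlope (M - 2) (w / ε)) w := by
  have h₃ : ε ^ (M - 5) = ε ^ (M - 2) / ε ^ 3 := by
    rw [← Real.rpow_natCast, ← Real.rpow_sub hε]; congr 1; push_cast; ring
  have h₁ : ε ^ (M - 3) = ε ^ (M - 2) / ε := by
    rw [← Real.rpow_sub_one hε.ne']; ring_nf
  refine ((((hasDerivAt_pow 4 w).const_mul _).add ((hasDerivAt_pow 2 w).const_mul _)).add_const
    _).congr_deriv ?_
  rw [quarticSlope, h₃, h₁]
  field_simp
  ring

theorem regularizedCoeff_even (M ε : ℝ) : (regularizedCoeff M ε).Even := by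
  intro w
  simp only [regularizedCoeff, matchingQuartic, abs_neg, even_two.neg_pow,
    (by decide : Even 4).neg_pow]

theorem hasDerivAt_regularizedCoeff {M ε v : ℝ} (hε : 0 < ε) (hv : 0 < v) :
    HasDerivAt (regularizedCoeff M ε)
      (if ε ≤ v then M * (M - 1) * v ^ (M - 2)
        else M * (M - 1) * ε ^ (M - 2) * quarticSlope (M - 2) (v / ε)) v := by
  have hglue : regularizedCoeff M ε =ᶠ[𝓝 v]
      fun w ↦ if ε ≤ w then M * w ^ (M - 1) else matchingQuartic M ε w := by
    filter_upwards [Ioi_mem_nhds hv] with w hw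
    simp only [regularizedCoeff, abs_of_pos (mem_Ioi.mp hw)]
  refine hglue.hasDerivAt_iff.mpr ?_
  rcases lt_trichotomy v ε with hlt | rfl | hgt
  · rw [if_neg hlt.not_ge]
    refine (hasDerivAt_matchingQuartic M hε v).congr_of_eventuallyEq ?_
    filter_upwards [Iio_mem_nhds hlt] with w hw
    exact if_neg (mem_Iio.mp hw).not_ge
  · rw [if_pos le_rfl]
    refine (hasDerivAt_const_mul_rpow_sub_one M hv).ite_le ?_ (matchingQuartic_self hε).symm
    simpa only [div_self hε.ne', quarticSlope_one, mul_one] using hasDerivAt_matchingQuartic M hε v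
  · rw [if_pos hgt.le]
    refine (hasDerivAt_const_mul_rpow_sub_one M hv).congr_of_eventuallyEq ?_
    filter_upwards [Ioi_mem_nhds hgt] with w hw
    exact if_pos (mem_Ioi.mp hw).le

/-- for `1 < M < 2`, `ε > 0`, the regularized coefficient `a_ε` from the
quartic matching construction satisfies `|a_ε'(v)| ≤ |a'(v)| = M(M−1)|v|^{M−2}` for all
`v ≠ 0`, where `a(v) = M|v|^{M−1}`. -/
theorem regularized_coefficient_derivative_bound (M ε : ℝ) (hM1 : 1 < M) (hM2 : M < 2)
    (hε : 0 < ε) :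
    ∀ v : ℝ, v ≠ 0 →
      |deriv (fun w : ℝ => if ε ≤ |w| then M * |w| ^ (M - 1)
          else (M * (M - 1) * (M - 3) * ε ^ (M - 5) / 8) * w ^ 4
            + (M * (M - 1) * (5 - M) * ε ^ (M - 3) / 4) * w ^ 2
            + M * (1 - (M - 1) * (7 - M) / 8) * ε ^ (M - 1)) v|
        ≤ M * (M - 1) * |v| ^ (M - 2) := by
  intro v hv
  change |deriv (regularizedCoeff M ε) v| ≤ _
  have hu : 0 < |v| := abs_pos.mpr hv
  have hMM : 0 ≤ M * (M - 1) := mul_nonneg (by linarith) (by linarith)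
  rw [← (regularizedCoeff_even M ε).abs_deriv_abs v, (hasDerivAt_regularizedCoeff hε hu).deriv]
  split_ifs with hεv
  · exact (abs_of_nonneg (mul_nonneg hMM (Real.rpow_nonneg hu.le _))).le
  · have hscale : 0 ≤ M * (M - 1) * ε ^ (M - 2) := mul_nonneg hMM (Real.rpow_nonneg hε.le _)
    calc |M * (M - 1) * ε ^ (M - 2) * quarticSlope (M - 2) (|v| / ε)|
        = M * (M - 1) * ε ^ (M - 2) * |quarticSlope (M - 2) (|v| / ε)| := by
          rw [abs_mul, abs_of_nonneg hscale]
      _ ≤ M * (M - 1) * ε ^ (M - 2) * (|v| / ε) ^ (M - 2) := by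
          gcongr
          exact abs_quarticSlope_le_rpow (by linarith) (by linarith) (div_pos hu hε)
            ((div_le_one hε).mpr (not_le.mp hεv).le)
      _ = M * (M - 1) * |v| ^ (M - 2) := by
          rw [Real.div_rpow hu.le hε.le]
          field_simp
end
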